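/- Mean value theorem for polynomials: for a < b and any polynomial P over a real closed field, there exists c in the open interval (a,b) such that P(b) − P(a) = P'(c) · (b − a). -/

import Mathlib

/-!
Rolle's theorem suffices (apply it to `(b - a) • (P - P(a)) - (P(b) - P(a)) • (X - a)`).
For Rolle, let `r` be the first root of `Q` after `a` and write
`Q = (X - a)^(m+1) (X - r)^(n+1) h` with `h` root-free on `[a, r]`, so that `h(a)` and `h(r)` have
the same sign. Then `Q' = (X - a)^m (X - r)^n g` where `g(a) = (m+1)(a - r) h(a)` and
`g(r) = (n+1)(r - a) h(r)` have opposite signs, and the intermediate value property gives a root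
of `g` strictly between `a` and `r`.
-/

open Polynomial

/-- A discrete real closed field: an ordered field in which the intermediate
value property holds for polynomials. -/
class RealClosedFieldIVT (R : Type*) [Field R] [LinearOrder R] [IsStrictOrderedRing R] : Prop where
  ivt : ∀ (p : Polynomial R) (a b : R), a ≤ b → p.eval a ≤ 0 → 0 ≤ p.eval b →
    ∃ x ∈ Set.Icc a b, p.eval x = 0

namespace Polynomial

theorem exists_eq_X_sub_C_pow_succ_mul {R : Type*} [CommRing R] {p : R[X]} (hp : p ≠ 0) {a : R}
    (ha : p.IsRoot a) : ∃ (m : ℕ) (q : R[X]), p = (X - C a) ^ (m + 1) * q ∧ q.eval a ≠ 0 := by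
  obtain ⟨m, hm⟩ := Nat.exists_eq_add_one_of_ne_zero ((rootMultiplicity_pos hp).2 ha).ne'
  refine ⟨m, p /ₘ (X - C a) ^ rootMultiplicity a p, ?_,
    eval_divByMonic_pow_rootMultiplicity_ne_zero a hp⟩
  rw [← hm, pow_mul_divByMonic_rootMultiplicity_eq]

theorem derivative_X_sub_C_pow_succ_mul_X_sub_C_pow_succ_mul {R : Type*} [CommRing R] (a r : R)
    (m n : ℕ) (h : R[X]) :
    derivative ((X - C a) ^ (m + 1) * (X - C r) ^ (n + 1) * h) =
      (X - C a) ^ m * (X - C r) ^ n *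
        ((m + 1 : R[X]) * (X - C r) * h + (n + 1 : R[X]) * (X - C a) * h
          + (X - C a) * (X - C r) * derivative h) := by
  simp only [derivative_mul, derivative_pow, derivative_sub, derivative_X, derivative_C,
    Nat.add_sub_cancel, Nat.cast_add, Nat.cast_one, sub_zero, mul_one, map_add, map_one, map_natCast]
  ring

theorem exists_isRoot_Ioc_forall_Ioo_not_isRoot {R : Type*} [CommRing R] [IsDomain R]
    [LinearOrder R] {p : R[X]} (hp : p ≠ 0) {a b : R} (hab : a < b) (hb : p.IsRoot b) :
    ∃ r ∈ Set.Ioc a b, p.IsRoot r ∧ ∀ x ∈ Set.Ioo a r, ¬ p.IsRoot x := by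
  obtain ⟨r, ⟨hr, hpr⟩, hmin⟩ := Set.exists_min_image {x | x ∈ Set.Ioc a b ∧ p.IsRoot x} id
    ((finite_setOfPred_isRoot hp).subset fun _ hx => hx.2) ⟨b, ⟨hab, le_rfl⟩, hb⟩
  refine ⟨r, hr, hpr, fun x hx hpx => ?_⟩
  exact (hmin x ⟨⟨hx.1, hx.2.le.trans hr.2⟩, hpx⟩).not_gt hx.2

end Polynomial

namespace RealClosedFieldIVT

variable {R : Type*} [Field R] [LinearOrder R] [IsStrictOrderedRing R] [RealClosedFieldIVT R]

theorem exists_isRoot_Icc_of_mul_nonpos (p : R[X]) {a b : R} (hab : a ≤ b)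
    (h : p.eval a * p.eval b ≤ 0) : ∃ x ∈ Set.Icc a b, p.IsRoot x := by
  rcases mul_nonpos_iff.mp h with ⟨ha, hb⟩ | ⟨ha, hb⟩
  · obtain ⟨x, hx, hx0⟩ := ivt (-p) a b hab (by simpa using ha) (by simpa using hb)
    exact ⟨x, hx, by simpa using hx0⟩
  · exact ivt p a b hab ha hb

theorem exists_isRoot_Ioo_of_mul_neg (p : R[X]) {a b : R} (hab : a ≤ b)
    (h : p.eval a * p.eval b < 0) : ∃ x ∈ Set.Ioo a b, p.IsRoot x := by
  obtain ⟨x, ⟨hax, hxb⟩, hx⟩ := exists_isRoot_Icc_of_mul_nonpos p hab h.le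
  have hxa : x ≠ a := by rintro rfl; simp_all
  have hxb' : x ≠ b := by rintro rfl; simp_all
  exact ⟨x, ⟨lt_of_le_of_ne hax hxa.symm, lt_of_le_of_ne hxb hxb'⟩, hx⟩

theorem mul_pos_of_forall_not_isRoot (p : R[X]) {a b : R} (hab : a ≤ b)
    (h : ∀ x ∈ Set.Icc a b, ¬ p.IsRoot x) : 0 < p.eval a * p.eval b := by
  by_contra! hle
  obtain ⟨x, hx, hpx⟩ := exists_isRoot_Icc_of_mul_nonpos p hab hle
  exact h x hx hpx

theorem exists_isRoot_derivative_of_forall_not_isRoot {a r : R} (har : a < r) (m n : ℕ)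
    (h : R[X]) (hh : ∀ x ∈ Set.Icc a r, ¬ h.IsRoot x) :
    ∃ c ∈ Set.Ioo a r, (derivative ((X - C a) ^ (m + 1) * (X - C r) ^ (n + 1) * h)).IsRoot c := by
  set g : R[X] := (m + 1 : R[X]) * (X - C r) * h + (n + 1 : R[X]) * (X - C a) * h
    + (X - C a) * (X - C r) * derivative h
  have hg : g.eval a * g.eval r =
      -(((m + 1) * (n + 1) * (r - a) ^ 2 : R) * (h.eval a * h.eval r)) := by
    simp only [g, eval_add, eval_mul, eval_sub, eval_X, eval_C, eval_natCast, eval_one]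
    ring
  have hneg : g.eval a * g.eval r < 0 := by
    rw [hg, neg_neg_iff_pos]
    exact mul_pos (by have := sub_pos.2 har; positivity)
      (mul_pos_of_forall_not_isRoot h har.le hh)
  obtain ⟨c, hc, hgc⟩ := exists_isRoot_Ioo_of_mul_neg g har.le hneg
  refine ⟨c, hc, ?_⟩
  rw [derivative_X_sub_C_pow_succ_mul_X_sub_C_pow_succ_mul, IsRoot, eval_mul, hgc.eq_zero,
    mul_zero]

theorem exists_isRoot_derivative_of_isRoot (Q : R[X]) {a b : R} (hab : a < b)
    (ha : Q.IsRoot a) (hb : Q.IsRoot b) : ∃ c ∈ Set.Ioo a b, (derivative Q).IsRoot c := by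
  rcases eq_or_ne Q 0 with rfl | hQ
  · exact ⟨(a + b) / 2, ⟨by linarith, by linarith⟩, by simp⟩
  obtain ⟨r, ⟨har, hrb⟩, hr, hfirst⟩ := exists_isRoot_Ioc_forall_Ioo_not_isRoot hQ hab hb
  obtain ⟨m, q, rfl, hqa⟩ := exists_eq_X_sub_C_pow_succ_mul hQ ha
  have hqr : q.IsRoot r := by
    simpa [IsRoot, sub_ne_zero.2 har.ne', pow_ne_zero] using hr
  obtain ⟨n, h, rfl, hhr⟩ := exists_eq_X_sub_C_pow_succ_mul (right_ne_zero_of_mul hQ) hqr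
  have hh : ∀ x ∈ Set.Icc a r, ¬ h.IsRoot x := by
    rintro x ⟨hax, hxr⟩ hx
    rcases hax.eq_or_lt with rfl | hax
    · simp [hx.eq_zero] at hqa
    rcases hxr.eq_or_lt with rfl | hxr
    · exact hhr hx.eq_zero
    exact hfirst x ⟨hax, hxr⟩ (by simp [IsRoot, hx.eq_zero])
  obtain ⟨c, ⟨hac, hcr⟩, hc⟩ := exists_isRoot_derivative_of_forall_not_isRoot har m n h hh
  exact ⟨c, ⟨hac, hcr.trans_le hrb⟩, by rwa [← mul_assoc]⟩

end RealClosedFieldIVT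

/-- Mean value theorem for polynomials over a real closed field. -/
theorem poly_mvt {R : Type*} [Field R] [LinearOrder R] [IsStrictOrderedRing R] [RealClosedFieldIVT R]
    (P : Polynomial R) (a b : R) (hab : a < b) :
    ∃ c ∈ Set.Ioo a b,
      P.eval b - P.eval a = (Polynomial.derivative P).eval c * (b - a) := by
  set Q : R[X] := C (b - a) * (P - C (P.eval a)) - C (P.eval b - P.eval a) * (X - C a)
  obtain ⟨c, hc, hQc⟩ := RealClosedFieldIVT.exists_isRoot_derivative_of_isRoot Q hab
    (by simp [Q]) (by simp only [Q, IsRoot, eval_sub, eval_mul, eval_C, eval_X]; ring)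
  refine ⟨c, hc, ?_⟩
  simp only [Q, IsRoot, derivative_sub, derivative_mul, derivative_C, derivative_X, zero_mul,
    zero_add, sub_zero, mul_one, eval_sub, eval_mul, eval_C] at hQc
  linear_combination -hQc
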